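/- Let f, h ∈ H^∞ with ‖h‖_∞ ≤ 1, set φ = f + conj(T_{h̄} f), and define k ∈ H^∞ by k(z) = conj(h(z̄)). Then for every p ∈ H², ⟨[T_φ*, T_φ] p, p⟩ = ‖H_{f̄} p‖² − ‖T_{k̄} H_{f̄} p‖², where norms are L² norms on ∂𝔻. -/

import Mathlib

open MeasureTheory Complex Real ContinuousLinearMap
open scoped InnerProductSpace

noncomputable section

namespace SpectralArea

instance : Fact ((0:ℝ) < 2 * Real.pi) := ⟨by positivity⟩
instance : Fact ((1:ENNReal) ≤ ⊤) := ⟨le_top⟩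

/-- The unit circle `∂𝔻`, parametrized by angle, i.e. `ℝ / 2πℤ`. -/
abbrev Circle2pi : Type := AddCircle (2 * Real.pi)

/-- Normalized arclength measure `dθ/(2π)` on the circle. -/
abbrev haar : Measure Circle2pi := AddCircle.haarAddCircle

/-- `L²(∂𝔻)` with respect to normalized arclength measure. -/
abbrev L2 : Type := Lp ℂ 2 haar

/-- `L^∞(∂𝔻)`. -/
abbrev Linf : Type := Lp ℂ ⊤ haar

/-- The Hardy space `H²`: the subspace of `L²` of functions whose negative Fourier
coefficients vanish. -/
def Hardy : Submodule ℂ L2 where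
  carrier := {u | ∀ n : ℤ, n < 0 → fourierCoeff (u : Circle2pi → ℂ) n = 0}
  add_mem' := by
    intro u v hu hv n hn
    rw [← fourierBasis_repr, map_add, lp.coeFn_add, Pi.add_apply,
      fourierBasis_repr, fourierBasis_repr, hu n hn, hv n hn, add_zero]
  zero_mem' := by
    intro n hn
    rw [← fourierBasis_repr, map_zero, lp.coeFn_zero, Pi.zero_apply]
  smul_mem' := by
    intro c u hu n hn
    rw [← fourierBasis_repr, _root_.map_smul, lp.coeFn_smul, Pi.smul_apply,
      fourierBasis_repr, hu n hn, smul_zero]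

lemma hardy_isClosed : IsClosed (Hardy : Set L2) := by
  have h : (Hardy : Set L2) =
      ⋂ n ∈ {n : ℤ | n < 0}, ((innerSL ℂ (fourierBasis n)) ⁻¹' {(0 : ℂ)}) := by
    ext u
    simp only [Set.mem_iInter, Set.mem_preimage, Set.mem_setOf_eq, Set.mem_singleton_iff,
      innerSL_apply_apply]
    constructor
    · intro hu n hn
      rw [← fourierBasis.repr_apply_apply u n, fourierBasis_repr]
      exact hu n hn
    · intro hu n hn
      rw [← fourierBasis_repr, fourierBasis.repr_apply_apply u n]
      exact hu n hn
  rw [h]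
  exact isClosed_biInter fun n _ =>
    isClosed_singleton.preimage (innerSL ℂ (fourierBasis n)).continuous

/-- `H²` is a complete (hence closed) subspace of `L²`. -/
instance : CompleteSpace Hardy := hardy_isClosed.completeSpace_coe

/-- The orthogonal projection `P : L² → H²`. -/
def proj : L2 →L[ℂ] Hardy := Hardy.orthogonalProjectionOnto

/-- Pointwise multiplication by an `L^∞` function, as a bounded operator on `L²`. -/
def mulL (φ : Linf) : L2 →L[ℂ] L2 :=
  LinearMap.mkContinuous
    { toFun := fun u => ((Lp.memLp u).smul (r := 2) (Lp.memLp φ)).toLp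
        ((φ : Circle2pi → ℂ) • (u : Circle2pi → ℂ))
      map_add' := by
        intro u v
        rw [← MemLp.toLp_add, MemLp.toLp_eq_toLp_iff]
        filter_upwards [Lp.coeFn_add u v] with x hx
        simp only [Pi.mul_apply, Pi.smul_apply, smul_eq_mul, hx, Pi.add_apply, mul_add]
      map_smul' := by
        intro c u
        rw [RingHom.id_apply, ← MemLp.toLp_const_smul, MemLp.toLp_eq_toLp_iff]
        filter_upwards [Lp.coeFn_smul c u] with x hx
        simp only [Pi.mul_apply, Pi.smul_apply, smul_eq_mul, hx]
        ring }
    ‖φ‖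
    (by
      intro u
      simp only [LinearMap.coe_mk, AddHom.coe_mk]
      rw [Lp.norm_toLp]
      calc (eLpNorm ((φ : Circle2pi → ℂ) • (u : Circle2pi → ℂ)) 2 haar).toReal
          ≤ (eLpNorm (φ : Circle2pi → ℂ) ⊤ haar * eLpNorm (u : Circle2pi → ℂ) 2 haar).toReal := by
            apply ENNReal.toReal_mono
              (ENNReal.mul_ne_top (Lp.eLpNorm_ne_top φ) (Lp.eLpNorm_ne_top u))
            exact eLpNorm_smul_le_mul_eLpNorm (Lp.aestronglyMeasurable u)
              (Lp.aestronglyMeasurable φ)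
        _ = ‖φ‖ * ‖u‖ := by
            rw [ENNReal.toReal_mul, Lp.norm_def, Lp.norm_def])

/-- Complex conjugation on `L^p` of the circle. -/
def conjLp {p : ENNReal} (f : Lp ℂ p haar) : Lp ℂ p haar :=
  Complex.conjLIE.lipschitz.compLp (map_zero Complex.conjLIE) f

/-- `f ↦ (θ ↦ conj (f (-θ)))`; on boundary values, this is `k(z) = conj (h (z̄))`. -/
def conjReflect (h : Linf) : Linf :=
  conjLp (Lp.compMeasurePreserving (fun θ : Circle2pi => -θ)
    (Measure.measurePreserving_neg haar) h)

/-- An `L^∞` function is in `L²` (the measure is finite). -/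
def toL2 (f : Linf) : L2 := ((Lp.memLp f).mono_exponent le_top).toLp f

/-- Membership in `H^∞`: a bounded function whose negative Fourier coefficients vanish
(i.e. the boundary value of a bounded analytic function on `𝔻`). -/
def MemHinf (f : Linf) : Prop := ∀ n : ℤ, n < 0 → fourierCoeff (f : Circle2pi → ℂ) n = 0

lemma fourierCoeff_congr_ae {f g : Circle2pi → ℂ} (h : f =ᵐ[haar] g) (n : ℤ) :
    fourierCoeff f n = fourierCoeff g n := by
  simp only [fourierCoeff]
  exact integral_congr_ae (by filter_upwards [h] with x hx; rw [hx])

lemma toL2_mem_Hardy {f : Linf} (hf : MemHinf f) : toL2 f ∈ Hardy := fun n hn => by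
  have h : (toL2 f : Circle2pi → ℂ) =ᵐ[haar] (f : Circle2pi → ℂ) := MemLp.coeFn_toLp _
  rw [fourierCoeff_congr_ae h n]
  exact hf n hn

/-- The Toeplitz operator `T_φ : H² → H²`, `T_φ u = P (φ u)`. -/
def Toeplitz (φ : Linf) : Hardy →L[ℂ] Hardy := proj ∘L mulL φ ∘L Hardy.subtypeL

/-- The Toeplitz operator viewed as acting on `L²` (precompose with inclusion,
postcompose with inclusion): `u ↦ P (φ u)` as an element of `L²`. -/
def ToeplitzL2 (φ : Linf) : L2 →L[ℂ] L2 := Hardy.subtypeL ∘L proj ∘L mulL φ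

/-- The unitary `U` on `L²`: `(U h)(z) = z̄ h(z̄)`, in angle coordinates
`(U h)(θ) = e^{-iθ} h(-θ)`. -/
def Umap : L2 →L[ℂ] L2 :=
  mulL (fourierLp ⊤ (-1)) ∘L
    (Lp.compMeasurePreservingₗᵢ ℂ (fun θ : Circle2pi => -θ)
      (Measure.measurePreserving_neg haar)).toContinuousLinearMap

/-- The Hankel operator `H_φ = U (I - P) M_φ`, viewed on all of `L²`. -/
def Hankel (φ : Linf) : L2 →L[ℂ] L2 :=
  Umap ∘L (ContinuousLinearMap.id ℂ L2 - Hardy.subtypeL ∘L proj) ∘L mulL φ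

/-- The self-commutator `[T*, T] = T*T - TT*`. -/
def selfCommutator (T : Hardy →L[ℂ] Hardy) : Hardy →L[ℂ] Hardy :=
  adjoint T ∘L T - T ∘L adjoint T


/-! ### Helper lemmas -/

section Helpers

open ComplexConjugate

lemma mulL_coeFn (φ : Linf) (u : L2) :
    (mulL φ u : Circle2pi → ℂ) =ᵐ[haar]
      fun x => (φ : Circle2pi → ℂ) x * (u : Circle2pi → ℂ) x := by
  have h : (mulL φ u : Circle2pi → ℂ) =ᵐ[haar]
      ((φ : Circle2pi → ℂ) • (u : Circle2pi → ℂ)) :=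
    MemLp.coeFn_toLp ((Lp.memLp u).smul (r := 2) (Lp.memLp φ))
  filter_upwards [h] with x hx
  simpa [Pi.smul_apply, smul_eq_mul] using hx

lemma conjLp_coeFn {p : ENNReal} (u : Lp ℂ p haar) :
    (conjLp u : Circle2pi → ℂ) =ᵐ[haar] fun x => conj ((u : Circle2pi → ℂ) x) := by
  have h := LipschitzWith.coeFn_compLp Complex.conjLIE.lipschitz
    (map_zero Complex.conjLIE) u
  filter_upwards [h] with x hx
  simp at hx
  exact hx

lemma toL2_coeFn (φ : Linf) :
    (toL2 φ : Circle2pi → ℂ) =ᵐ[haar] (φ : Circle2pi → ℂ) :=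
  MemLp.coeFn_toLp _

lemma fourierCoeff_toL2 (φ : Linf) (n : ℤ) :
    fourierCoeff (toL2 φ : Circle2pi → ℂ) n = fourierCoeff (φ : Circle2pi → ℂ) n :=
  fourierCoeff_congr_ae (toL2_coeFn φ) n

/-- Fourier coefficients of `fourier m * g`. -/
lemma fourierCoeff_fourier_mul (g : Circle2pi → ℂ) (m n : ℤ) :
    fourierCoeff (fun θ => fourier m θ * g θ) n = fourierCoeff g (n - m) := by
  simp only [fourierCoeff, smul_eq_mul]
  refine integral_congr_ae (Filter.Eventually.of_forall fun θ => ?_)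
  show fourier (-n) θ * (fourier m θ * g θ) = fourier (-(n - m)) θ * g θ
  rw [← mul_assoc, ← fourier_add]
  have h3 : -n + m = -(n - m) := by ring
  rw [h3]

lemma fourier_neg_arg (n : ℤ) (θ : Circle2pi) : fourier n (-θ) = fourier (-n) θ := by
  rw [fourier_apply, fourier_apply, smul_neg, ← neg_smul]

/-- Fourier coefficients of `g ∘ neg`. -/
lemma fourierCoeff_comp_neg (g : Circle2pi → ℂ) (n : ℤ) :
    fourierCoeff (fun θ => g (-θ)) n = fourierCoeff g (-n) := by
  simp only [fourierCoeff, smul_eq_mul]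
  have hmp : MeasurePreserving (fun θ : Circle2pi => -θ) haar haar :=
    Measure.measurePreserving_neg haar
  have h2 := hmp.integral_comp (μ := haar) (ν := haar)
    (MeasurableEquiv.neg Circle2pi).measurableEmbedding
    (fun θ => fourier (-(-n)) θ * g θ)
  rw [← h2]
  refine integral_congr_ae (Filter.Eventually.of_forall fun θ => ?_)
  show fourier (-n) θ * g (-θ) = fourier (-(-n)) (-θ) * g (-θ)
  rw [fourier_neg_arg]
  simp only [neg_neg]

/-- Fourier coefficients of the conjugate. -/
lemma fourierCoeff_conj (g : Circle2pi → ℂ) (n : ℤ) :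
    fourierCoeff (fun θ => conj (g θ)) n = conj (fourierCoeff g (-n)) := by
  simp only [fourierCoeff, smul_eq_mul]
  rw [← integral_conj]
  refine integral_congr_ae (Filter.Eventually.of_forall fun θ => ?_)
  show fourier (-n) θ * conj (g θ) = conj (fourier (- -n) θ * g θ)
  rw [map_mul, ← fourier_neg, neg_neg]

/-- Coefficient as inner product with the Fourier basis. -/
lemma coeff_eq_inner (u : L2) (n : ℤ) :
    fourierCoeff (u : Circle2pi → ℂ) n = ⟪(fourierBasis n : L2), u⟫_ℂ := by
  rw [← fourierBasis_repr, fourierBasis.repr_apply_apply]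

lemma fourierBasis_mem_hardy {n : ℤ} (hn : 0 ≤ n) : (fourierBasis n : L2) ∈ Hardy := by
  intro m hm
  rw [← fourierBasis_repr, fourierBasis.repr_self, lp.single_apply]
  have : m ≠ n := by omega
  simp [this]

/-- "Co-Hardy": all nonnegative Fourier coefficients vanish. -/
def CoH (v : L2) : Prop := ∀ n : ℤ, 0 ≤ n → fourierCoeff (v : Circle2pi → ℂ) n = 0

lemma mem_hardy_iff {v : L2} :
    v ∈ Hardy ↔ ∀ n : ℤ, n < 0 → fourierCoeff (v : Circle2pi → ℂ) n = 0 := Iff.rfl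

lemma coH_iff_mem_orthogonal {v : L2} : v ∈ Hardyᗮ ↔ CoH v := by
  constructor
  · intro hv n hn
    rw [coeff_eq_inner]
    exact (Submodule.mem_orthogonal Hardy v).1 hv _ (fourierBasis_mem_hardy hn)
  · intro hv
    rw [Submodule.mem_orthogonal]
    intro u hu
    rw [← fourierBasis.repr.inner_map_map u v, lp.inner_eq_tsum]
    have hterm : ∀ i : ℤ, ⟪fourierBasis.repr u i, fourierBasis.repr v i⟫_ℂ = 0 := by
      intro i
      rw [RCLike.inner_apply, fourierBasis_repr, fourierBasis_repr]
      rcases le_or_gt 0 i with hi | hi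
      · rw [hv i hi, zero_mul]
      · rw [hu i hi, map_zero, mul_zero]
    simp only [hterm, tsum_zero]

/-! ### Projections -/

/-- The complementary projection `v ↦ v - P v`. -/
def Nproj (v : L2) : L2 := v - ((proj v : Hardy) : L2)

lemma proj_coe_of_mem {v : L2} (hv : v ∈ Hardy) : ((proj v : Hardy) : L2) = v := by
  have h := Submodule.orthogonalProjectionOnto_mem_subspace_eq_self (K := Hardy) ⟨v, hv⟩
  have h2 := congrArg (Subtype.val) h
  simpa [proj] using h2

lemma proj_eq_zero_of_coH {v : L2} (hv : CoH v) : proj v = 0 :=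
  Submodule.orthogonalProjectionOnto_apply_of_mem_orthogonal
    (coH_iff_mem_orthogonal.mpr hv)

lemma coH_Nproj (v : L2) : CoH (Nproj v) :=
  coH_iff_mem_orthogonal.mp (Submodule.sub_starProjection_mem_orthogonal (K := Hardy) v)

lemma Nproj_of_mem {v : L2} (hv : v ∈ Hardy) : Nproj v = 0 := by
  simp [Nproj, proj_coe_of_mem hv]

lemma Nproj_of_coH {v : L2} (hv : CoH v) : Nproj v = v := by
  simp [Nproj, proj_eq_zero_of_coH hv]

lemma Nproj_add (u v : L2) : Nproj (u + v) = Nproj u + Nproj v := by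
  simp only [Nproj, proj, map_add, Submodule.coe_add]
  abel

lemma Nproj_add_right_mem {u v : L2} (hv : v ∈ Hardy) : Nproj (u + v) = Nproj u := by
  rw [Nproj_add, Nproj_of_mem hv, add_zero]

lemma proj_add_Nproj (v : L2) : ((proj v : Hardy) : L2) + Nproj v = v := by
  simp [Nproj]

lemma norm_sq_decomp (v : L2) :
    ‖v‖ ^ 2 = ‖((proj v : Hardy) : L2)‖ ^ 2 + ‖Nproj v‖ ^ 2 := by
  have hinner : ⟪((proj v : Hardy) : L2), Nproj v⟫_ℂ = 0 :=
    Submodule.inner_right_of_mem_orthogonal (proj v).2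
      (Submodule.sub_starProjection_mem_orthogonal (K := Hardy) v)
  calc ‖v‖ ^ 2 = ‖((proj v : Hardy) : L2) + Nproj v‖ ^ 2 := by rw [proj_add_Nproj]
    _ = _ := by
        rw [norm_add_sq (𝕜 := ℂ), hinner]
        simp

/-! ### Multiplication algebra -/

lemma mulL_add_symbol (φ ψ : Linf) (u : L2) :
    mulL (φ + ψ) u = mulL φ u + mulL ψ u := by
  refine Lp.ext ?_
  filter_upwards [mulL_coeFn (φ + ψ) u, mulL_coeFn φ u, mulL_coeFn ψ u,
    Lp.coeFn_add φ ψ, Lp.coeFn_add (mulL φ u) (mulL ψ u)] with x h1 h2 h3 h4 h5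
  rw [h1, h5, Pi.add_apply, h2, h3, h4, Pi.add_apply, add_mul]

/-- Pointwise product of two `L^∞` functions. -/
def prodLinf (φ ψ : Linf) : Linf :=
  ((Lp.memLp ψ).smul (r := ⊤) (Lp.memLp φ)).toLp
    ((φ : Circle2pi → ℂ) • (ψ : Circle2pi → ℂ))

lemma prodLinf_coeFn (φ ψ : Linf) :
    (prodLinf φ ψ : Circle2pi → ℂ) =ᵐ[haar]
      fun x => (φ : Circle2pi → ℂ) x * (ψ : Circle2pi → ℂ) x := by
  have h : (prodLinf φ ψ : Circle2pi → ℂ) =ᵐ[haar]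
      ((φ : Circle2pi → ℂ) • (ψ : Circle2pi → ℂ)) := MemLp.coeFn_toLp _
  filter_upwards [h] with x hx
  simpa using hx

lemma mulL_prodLinf (φ ψ : Linf) (u : L2) :
    mulL (prodLinf φ ψ) u = mulL φ (mulL ψ u) := by
  refine Lp.ext ?_
  filter_upwards [mulL_coeFn (prodLinf φ ψ) u, mulL_coeFn φ (mulL ψ u),
    mulL_coeFn ψ u, prodLinf_coeFn φ ψ] with x h1 h2 h3 h4
  rw [h1, h2, h3, h4, mul_assoc]

lemma toL2_prodLinf (φ ψ : Linf) : toL2 (prodLinf φ ψ) = mulL φ (toL2 ψ) := by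
  refine Lp.ext ?_
  filter_upwards [toL2_coeFn (prodLinf φ ψ), mulL_coeFn φ (toL2 ψ),
    prodLinf_coeFn φ ψ, toL2_coeFn ψ] with x h1 h2 h3 h4
  rw [h1, h2, h3, h4]

lemma conjLp_conjLp {p : ENNReal} (u : Lp ℂ p haar) : conjLp (conjLp u) = u := by
  refine Lp.ext ?_
  filter_upwards [conjLp_coeFn (conjLp u), conjLp_coeFn u] with x h1 h2
  rw [h1, h2]
  simp

lemma conjLp_sub {p : ENNReal} (u v : Lp ℂ p haar) :
    conjLp (u - v) = conjLp u - conjLp v := by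
  refine Lp.ext ?_
  filter_upwards [conjLp_coeFn (u - v), conjLp_coeFn u, conjLp_coeFn v,
    Lp.coeFn_sub u v, Lp.coeFn_sub (conjLp u) (conjLp v)] with x h1 h2 h3 h4 h5
  rw [h1, h5, Pi.sub_apply, h2, h3, h4, Pi.sub_apply, map_sub]

lemma conjLp_prodLinf (φ ψ : Linf) :
    conjLp (prodLinf φ ψ) = prodLinf (conjLp φ) (conjLp ψ) := by
  refine Lp.ext ?_
  filter_upwards [conjLp_coeFn (prodLinf φ ψ), prodLinf_coeFn φ ψ,
    prodLinf_coeFn (conjLp φ) (conjLp ψ), conjLp_coeFn φ, conjLp_coeFn ψ]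
    with x h1 h2 h3 h4 h5
  rw [h1, h2, h3, h4, h5, map_mul]

lemma toL2_sub (φ ψ : Linf) : toL2 (φ - ψ) = toL2 φ - toL2 ψ := by
  refine Lp.ext ?_
  filter_upwards [toL2_coeFn (φ - ψ), toL2_coeFn φ, toL2_coeFn ψ,
    Lp.coeFn_sub φ ψ, Lp.coeFn_sub (toL2 φ) (toL2 ψ)] with x h1 h2 h3 h4 h5
  rw [h1, h5, Pi.sub_apply, h2, h3, h4, Pi.sub_apply]

lemma toL2_conjLp (φ : Linf) : toL2 (conjLp φ) = conjLp (toL2 φ) := by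
  refine Lp.ext ?_
  filter_upwards [toL2_coeFn (conjLp φ), conjLp_coeFn φ,
    conjLp_coeFn (toL2 φ), toL2_coeFn φ] with x h1 h2 h3 h4
  rw [h1, h2, h3, h4]

/-! ### Fourier coefficients of products -/

lemma fourierCoeff_mulL_fourierBasis (ψ : Linf) (m n : ℤ) :
    fourierCoeff (mulL ψ (fourierBasis m) : Circle2pi → ℂ) n =
      fourierCoeff (ψ : Circle2pi → ℂ) (n - m) := by
  have hb : ((fourierBasis m : L2) : Circle2pi → ℂ) =ᵐ[haar] fourier m := by
    have : (fourierBasis m : L2) = fourierLp 2 m := by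
      rw [← coe_fourierBasis]
    rw [this]
    exact coeFn_fourierLp 2 m
  have h : (mulL ψ (fourierBasis m) : Circle2pi → ℂ) =ᵐ[haar]
      fun θ => fourier m θ * (ψ : Circle2pi → ℂ) θ := by
    filter_upwards [mulL_coeFn ψ (fourierBasis m), hb] with x h1 h2
    rw [h1, h2, mul_comm]
  rw [fourierCoeff_congr_ae h n, fourierCoeff_fourier_mul]

lemma hasSum_fourierCoeff_mulL (ψ : Linf) (u : L2) (n : ℤ) :
    HasSum (fun m : ℤ => fourierCoeff (u : Circle2pi → ℂ) m *
        fourierCoeff (ψ : Circle2pi → ℂ) (n - m))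
      (fourierCoeff (mulL ψ u : Circle2pi → ℂ) n) := by
  have H := fourierBasis.hasSum_repr u
  have H2 := H.mapL ((innerSL ℂ ((fourierBasis n : L2))).comp (mulL ψ))
  have hterm : ∀ m : ℤ,
      ((innerSL ℂ ((fourierBasis n : L2))).comp (mulL ψ))
          (fourierBasis.repr u m • (fourierBasis m : L2)) =
        fourierCoeff (u : Circle2pi → ℂ) m *
          fourierCoeff (ψ : Circle2pi → ℂ) (n - m) := by
    intro m
    rw [ContinuousLinearMap.map_smul]
    simp only [ContinuousLinearMap.coe_comp', Function.comp_apply, innerSL_apply_apply,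
      smul_eq_mul]
    rw [← coeff_eq_inner (mulL ψ (fourierBasis m)) n, fourierCoeff_mulL_fourierBasis,
      fourierBasis_repr]
  have H3 : ((innerSL ℂ ((fourierBasis n : L2))).comp (mulL ψ)) u =
      fourierCoeff (mulL ψ u : Circle2pi → ℂ) n := by
    simp only [ContinuousLinearMap.coe_comp', Function.comp_apply, innerSL_apply_apply]
    rw [← coeff_eq_inner]
  rw [← H3]
  simp only [hterm] at H2
  exact H2

lemma mulL_mem_hardy {ψ : Linf} (hψ : MemHinf ψ) {u : L2} (hu : u ∈ Hardy) :
    mulL ψ u ∈ Hardy := by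
  intro n hn
  have H := hasSum_fourierCoeff_mulL ψ u n
  have h0 : (fun m : ℤ => fourierCoeff (u : Circle2pi → ℂ) m *
      fourierCoeff (ψ : Circle2pi → ℂ) (n - m)) = fun _ => (0 : ℂ) := by
    funext m
    rcases lt_or_ge m 0 with hm | hm
    · rw [hu m hm, zero_mul]
    · rw [hψ (n - m) (by omega), mul_zero]
  rw [h0] at H
  exact (H.unique hasSum_zero)

/-! ### The unitary `U` -/

lemma Umap_coeFn (v : L2) :
    (Umap v : Circle2pi → ℂ) =ᵐ[haar]
      fun θ => fourier (-1) θ * (v : Circle2pi → ℂ) (-θ) := by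
  have h1 := mulL_coeFn (fourierLp ⊤ (-1))
    (Lp.compMeasurePreserving (fun θ : Circle2pi => -θ)
      (Measure.measurePreserving_neg haar) v)
  have h2 := Lp.coeFn_compMeasurePreserving v (Measure.measurePreserving_neg haar)
  have h3 := coeFn_fourierLp (T := 2 * Real.pi) ⊤ (-1)
  filter_upwards [h1, h2, h3] with x hx1 hx2 hx3
  rw [show (Umap v : Circle2pi → ℂ) x = _ from hx1, hx3, hx2]
  rfl

lemma fourierCoeff_Umap (v : L2) (n : ℤ) :
    fourierCoeff (Umap v : Circle2pi → ℂ) n =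
      fourierCoeff (v : Circle2pi → ℂ) (-(n + 1)) := by
  rw [fourierCoeff_congr_ae (Umap_coeFn v) n, fourierCoeff_fourier_mul,
    fourierCoeff_comp_neg]
  norm_num

lemma Umap_mem_hardy_of_coH {v : L2} (hv : CoH v) : Umap v ∈ Hardy := by
  intro n hn
  rw [fourierCoeff_Umap]
  exact hv _ (by omega)

lemma coH_Umap_of_mem {v : L2} (hv : v ∈ Hardy) : CoH (Umap v) := by
  intro n hn
  rw [fourierCoeff_Umap]
  exact hv _ (by omega)

lemma norm_Umap (v : L2) : ‖Umap v‖ = ‖v‖ := by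
  have hw : ‖Lp.compMeasurePreserving (fun θ : Circle2pi => -θ)
      (Measure.measurePreserving_neg haar) v‖ = ‖v‖ :=
    (Lp.compMeasurePreservingₗᵢ ℂ (fun θ : Circle2pi => -θ)
      (Measure.measurePreserving_neg haar)).norm_map v
  set w := Lp.compMeasurePreserving (fun θ : Circle2pi => -θ)
      (Measure.measurePreserving_neg haar) v
  have h1 : ‖Umap v‖ = ‖mulL (fourierLp ⊤ (-1)) w‖ := rfl
  rw [h1, ← hw]
  rw [Lp.norm_def, Lp.norm_def]
  congr 1
  apply eLpNorm_congr_norm_ae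
  filter_upwards [mulL_coeFn (fourierLp ⊤ (-1)) w, coeFn_fourierLp (T := 2 * Real.pi) ⊤ (-1)]
    with x h1 h2
  rw [h1, h2, norm_mul]
  have : ‖fourier (-1) x‖ = 1 := Circle.norm_coe _
  rw [this, one_mul]

lemma proj_Umap (v : L2) :
    ((proj (Umap v) : Hardy) : L2) = Umap (Nproj v) := by
  have hv : Umap v = Umap ((proj v : Hardy) : L2) + Umap (Nproj v) := by
    rw [← map_add, proj_add_Nproj]
  rw [show proj (Umap v) = proj (Umap ((proj v : Hardy) : L2)) + proj (Umap (Nproj v)) by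
    rw [← map_add, ← hv]]
  rw [Submodule.coe_add, proj_coe_of_mem (Umap_mem_hardy_of_coH (coH_Nproj v)),
    show proj (Umap ((proj v : Hardy) : L2)) = 0 from
      proj_eq_zero_of_coH (coH_Umap_of_mem (proj v).2)]
  simp

/-! ### Inner products and adjoints -/

lemma inner_mulL (ψ : Linf) (u v : L2) :
    ⟪mulL ψ u, v⟫_ℂ = ⟪u, mulL (conjLp ψ) v⟫_ℂ := by
  rw [MeasureTheory.L2.inner_def, MeasureTheory.L2.inner_def]
  refine integral_congr_ae ?_
  filter_upwards [mulL_coeFn ψ u, mulL_coeFn (conjLp ψ) v, conjLp_coeFn ψ]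
    with x h1 h2 h3
  rw [RCLike.inner_apply, RCLike.inner_apply, h1, h2, h3, map_mul]
  ring

lemma inner_proj_left (w : L2) (y : Hardy) :
    ⟪proj w, y⟫_ℂ = ⟪w, (y : L2)⟫_ℂ := by
  rw [Submodule.coe_inner]
  conv_rhs => rw [← proj_add_Nproj w]
  rw [inner_add_left]
  have h0 : ⟪Nproj w, (y : L2)⟫_ℂ = 0 :=
    Submodule.inner_left_of_mem_orthogonal y.2
      (Submodule.sub_starProjection_mem_orthogonal (K := Hardy) w)
  rw [h0, add_zero]

lemma inner_proj_right (x : Hardy) (w : L2) :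
    ⟪x, proj w⟫_ℂ = ⟪(x : L2), w⟫_ℂ := by
  rw [← inner_conj_symm x (proj w), inner_proj_left, inner_conj_symm]

lemma adjoint_Toeplitz (ψ : Linf) :
    adjoint (Toeplitz ψ) = Toeplitz (conjLp ψ) := by
  symm
  rw [ContinuousLinearMap.eq_adjoint_iff]
  intro x y
  have hl : Toeplitz (conjLp ψ) x = proj (mulL (conjLp ψ) (x : L2)) := rfl
  have hr : Toeplitz ψ y = proj (mulL ψ (y : L2)) := rfl
  rw [hl, hr, inner_proj_left, inner_proj_right, inner_mulL, conjLp_conjLp]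

lemma norm_mulL_conjLp (ψ : Linf) (u : L2) :
    ‖mulL (conjLp ψ) u‖ = ‖mulL ψ u‖ := by
  rw [Lp.norm_def, Lp.norm_def]
  congr 1
  apply eLpNorm_congr_norm_ae
  filter_upwards [mulL_coeFn (conjLp ψ) u, mulL_coeFn ψ u, conjLp_coeFn ψ]
    with x h1 h2 h3
  rw [h1, h2, h3, norm_mul, norm_mul, RCLike.norm_conj]

lemma conjReflect_coeFn (h : Linf) :
    (conjReflect h : Circle2pi → ℂ) =ᵐ[haar]
      fun x => conj ((h : Circle2pi → ℂ) (-x)) := by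
  have h1 := conjLp_coeFn (Lp.compMeasurePreserving (fun θ : Circle2pi => -θ)
    (Measure.measurePreserving_neg haar) h)
  have h2 := Lp.coeFn_compMeasurePreserving h (Measure.measurePreserving_neg haar)
  filter_upwards [h1, h2] with x hx1 hx2
  rw [show (conjReflect h : Circle2pi → ℂ) x = _ from hx1, hx2]
  rfl

lemma mulL_conjK_Umap (h : Linf) (v : L2) :
    mulL (conjLp (conjReflect h)) (Umap v) = Umap (mulL h v) := by
  refine Lp.ext ?_
  have hpull : ((mulL h v : Circle2pi → ℂ) ∘ (fun θ : Circle2pi => -θ)) =ᵐ[haar]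
      ((fun x => (h : Circle2pi → ℂ) x * (v : Circle2pi → ℂ) x) ∘
        (fun θ : Circle2pi => -θ)) :=
    (Measure.measurePreserving_neg haar).quasiMeasurePreserving.ae_eq_comp
      (mulL_coeFn h v)
  have hpull2 : ((conjLp (conjReflect h) : Linf) : Circle2pi → ℂ) =ᵐ[haar]
      fun x => (h : Circle2pi → ℂ) (-x) := by
    filter_upwards [conjLp_coeFn (conjReflect h), conjReflect_coeFn h] with x hx1 hx2
    rw [hx1, hx2]
    simp
  filter_upwards [mulL_coeFn (conjLp (conjReflect h)) (Umap v), hpull2,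
    Umap_coeFn v, Umap_coeFn (mulL h v), hpull] with x h1 h2 h3 h4 h5
  rw [h1, h2, h3, h4]
  have h5' : (mulL h v : Circle2pi → ℂ) (-x) =
      (h : Circle2pi → ℂ) (-x) * (v : Circle2pi → ℂ) (-x) := h5
  rw [h5']
  ring

lemma fourierCoeff_neg_fun (g : Circle2pi → ℂ) (n : ℤ) :
    fourierCoeff (fun θ => -(g θ)) n = -fourierCoeff g n := by
  simp only [fourierCoeff, smul_eq_mul, mul_neg]
  exact integral_neg _

lemma fourierCoeff_coe_neg (v : L2) (n : ℤ) :
    fourierCoeff ((-v : L2) : Circle2pi → ℂ) n = -fourierCoeff (v : Circle2pi → ℂ) n := by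
  rw [fourierCoeff_congr_ae (g := fun θ => -((v : Circle2pi → ℂ) θ)) (Lp.coeFn_neg v),
    fourierCoeff_neg_fun]

lemma fourierCoeff_conjLp_coe {pp : ENNReal} (u : Lp ℂ pp haar) (n : ℤ) :
    fourierCoeff ((conjLp u : Lp ℂ pp haar) : Circle2pi → ℂ) n =
      conj (fourierCoeff (u : Circle2pi → ℂ) (-n)) := by
  rw [fourierCoeff_congr_ae (conjLp_coeFn u) n, fourierCoeff_conj]

lemma norm_Toeplitz_sq (ψ : Linf) (p : Hardy) :
    ‖Toeplitz ψ p‖ ^ 2 = ‖mulL ψ (p : L2)‖ ^ 2 - ‖Nproj (mulL ψ (p : L2))‖ ^ 2 := by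
  have h1 : ‖Toeplitz ψ p‖ = ‖((proj (mulL ψ (p : L2)) : Hardy) : L2)‖ := rfl
  rw [h1, norm_sq_decomp (mulL ψ (p : L2))]
  ring

lemma hankel_eq (ψ : Linf) (v : L2) : Hankel ψ v = Umap (Nproj (mulL ψ v)) := by
  have : (ContinuousLinearMap.id ℂ L2 - Hardy.subtypeL ∘L proj) (mulL ψ v) =
      Nproj (mulL ψ v) := by
    simp [Nproj, Submodule.subtypeL_apply]
  rw [show Hankel ψ v = Umap ((ContinuousLinearMap.id ℂ L2 - Hardy.subtypeL ∘L proj)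
    (mulL ψ v)) from rfl, this]

end Helpers

open ComplexConjugate

set_option maxHeartbeats 1000000 in
/-- For `f, h ∈ H^∞` with `‖h‖_∞ ≤ 1`, `φ = f + conj (T_{h̄} f)` and
`k(z) = conj (h(z̄))`, for every `p ∈ H²`:
`⟨[T_φ*, T_φ] p, p⟩ = ‖H_{f̄} p‖² - ‖T_{k̄} H_{f̄} p‖²`. -/
theorem inner_selfCommutator_eq_toeplitz_hankel (f h φ k : Linf)
    (hf : MemHinf f) (hh : MemHinf h) (hhnorm : ‖h‖ ≤ 1)
    (hφ : toL2 φ = toL2 f +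
      conjLp ((Toeplitz (conjLp h) ⟨toL2 f, toL2_mem_Hardy hf⟩ : Hardy) : L2))
    (hkdef : k = conjReflect h) :
    ∀ p : Hardy,
      ⟪selfCommutator (Toeplitz φ) p, p⟫_ℂ =
        ((‖Hankel (conjLp f) (p : L2)‖ ^ 2 -
          ‖ToeplitzL2 (conjLp k) (Hankel (conjLp f) (p : L2))‖ ^ 2 : ℝ) : ℂ) := by
  intro p
  have hTadj := adjoint_Toeplitz φ
  set A : L2 := mulL (conjLp f) (p : L2) with hA
  -- Step 1: LHS = ‖T p‖² - ‖T* p‖²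
  have hLHS : ⟪selfCommutator (Toeplitz φ) p, p⟫_ℂ =
      ((‖Toeplitz φ p‖ ^ 2 - ‖Toeplitz (conjLp φ) p‖ ^ 2 : ℝ) : ℂ) := by
    set T := Toeplitz φ with hT
    have h1 : selfCommutator T p = adjoint T (T p) - T (adjoint T p) := rfl
    rw [h1, inner_sub_left, adjoint_inner_left]
    have h2 : ⟪T (adjoint T p), p⟫_ℂ = ⟪adjoint T p, adjoint T p⟫_ℂ := by
      rw [← inner_conj_symm (T (adjoint T p)) p, ← adjoint_inner_left, inner_conj_symm]
    rw [h2, inner_self_eq_norm_sq_to_K, inner_self_eq_norm_sq_to_K (𝕜 := ℂ) (adjoint T p), hTadj]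
    push_cast
    rfl
  -- Step 3: the symbol w' = conj (φ - f) is in H^∞
  set g0 : Hardy := Toeplitz (conjLp h) ⟨toL2 f, toL2_mem_Hardy hf⟩ with hg0
  set m : L2 := mulL (conjLp h) (toL2 f) with hm
  have hg0m : (g0 : L2) = ((proj m : Hardy) : L2) := rfl
  set w' : Linf := conjLp (φ - f) with hw'def
  have htoL2w' : toL2 w' = (g0 : L2) := by
    rw [hw'def, toL2_conjLp, toL2_sub]
    rw [show toL2 φ - toL2 f = conjLp ((g0 : Hardy) : L2) by rw [hφ]; abel]
    rw [conjLp_conjLp]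
  have hw' : MemHinf w' := by
    intro n hn
    rw [← fourierCoeff_toL2 w' n, htoL2w']
    exact g0.2 n hn
  -- Step 4: Nproj (mulL (conjLp φ) p) = Nproj A
  have hsplitconj : conjLp φ = conjLp f + w' := by
    rw [hw'def, conjLp_sub]
    abel
  have hN1 : Nproj (mulL (conjLp φ) (p : L2)) = Nproj A := by
    rw [hsplitconj, mulL_add_symbol, ← hA]
    exact Nproj_add_right_mem (mulL_mem_hardy hw' p.2)
  -- Step 5: Nproj (mulL φ p) = Nproj (mulL h A)
  set d : Linf := conjLp w' - prodLinf h (conjLp f) with hddef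
  have hconjd : conjLp d = w' - prodLinf (conjLp h) f := by
    rw [hddef, conjLp_sub, conjLp_conjLp, conjLp_prodLinf, conjLp_conjLp]
  have htoL2cd : toL2 (conjLp d) = -(Nproj m) := by
    rw [hconjd, toL2_sub, htoL2w', toL2_prodLinf, ← hm, hg0m, Nproj]
    abel
  have hd : MemHinf d := by
    intro n hn
    have h1 : fourierCoeff (d : Circle2pi → ℂ) n =
        conj (fourierCoeff ((conjLp d : Linf) : Circle2pi → ℂ) (-n)) := by
      rw [fourierCoeff_conjLp_coe, neg_neg, Complex.conj_conj]
    rw [h1, ← fourierCoeff_toL2 (conjLp d) (-n), htoL2cd, fourierCoeff_coe_neg,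
      coH_Nproj m (-n) (by omega), neg_zero, map_zero]
  have hsplitphi : φ = f + conjLp w' := by
    rw [hw'def, conjLp_conjLp]
    abel
  have hcw : conjLp w' = prodLinf h (conjLp f) + d := by
    rw [hddef]
    abel
  have hN2 : Nproj (mulL φ (p : L2)) = Nproj (mulL h A) := by
    rw [hsplitphi, mulL_add_symbol, hcw, mulL_add_symbol, mulL_prodLinf, ← hA]
    rw [show mulL f (p : L2) + (mulL h A + mulL d (p : L2)) =
      mulL h A + (mulL f (p : L2) + mulL d (p : L2)) by abel]
    exact Nproj_add_right_mem
      (Hardy.add_mem (mulL_mem_hardy hf p.2) (mulL_mem_hardy hd p.2))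
  -- Step 6: Hankel term
  have hHank : Hankel (conjLp f) (p : L2) = Umap (Nproj A) := by
    rw [hankel_eq, hA]
  have hHankNorm : ‖Hankel (conjLp f) (p : L2)‖ = ‖Nproj A‖ := by
    rw [hHank, norm_Umap]
  -- Step 7: Toeplitz-of-Hankel term
  have hTH : ToeplitzL2 (conjLp k) (Hankel (conjLp f) (p : L2)) =
      Umap (Nproj (mulL h A)) := by
    have h1 : ToeplitzL2 (conjLp k) (Hankel (conjLp f) (p : L2)) =
        ((proj (mulL (conjLp k) (Umap (Nproj A))) : Hardy) : L2) := by
      rw [hHank]; rfl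
    rw [h1, hkdef, mulL_conjK_Umap, proj_Umap]
    congr 1
    have hmem : mulL h (((proj A : Hardy) : L2)) ∈ Hardy :=
      mulL_mem_hardy hh (proj A).2
    have hsplit : mulL h (Nproj A) = mulL h A + (-(mulL h ((proj A : Hardy) : L2))) := by
      rw [Nproj, map_sub]
      abel
    rw [hsplit]
    exact Nproj_add_right_mem (Hardy.neg_mem hmem)
  have hTHNorm : ‖ToeplitzL2 (conjLp k) (Hankel (conjLp f) (p : L2))‖ =
      ‖Nproj (mulL h A)‖ := by
    rw [hTH, norm_Umap]
  -- Step 8: combine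
  rw [hLHS, norm_Toeplitz_sq, norm_Toeplitz_sq, hN1, hN2, norm_mulL_conjLp,
    hHankNorm, hTHNorm]
  push_cast
  ring

end SpectralArea
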